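/- arXiv:2406.03570 — 2 statements merged into one kernel-verified Lean document; each statement's English description precedes it below -/
import Mathlib

section
/- For every even integer n ≥ 2, with the even-case weights one has the congruences d ≡ 2 (mod a_{n+1}), a_0 ≡ 1 (mod a_{n+1}), and a_0 + a_1 + ··· + a_n ≡ 3 (mod a_{n+1}). -/
/-- The Sylvester sequence: `s 0 = 2` and `s (k+1) = s 0 * s 1 * ⋯ * s k + 1`,
equivalently `s (k+1) = s k * (s k - 1) + 1`. -/
def sylvester : ℕ → ℕ
  | 0 => 2
  | n + 1 => sylvester n * (sylvester n - 1) + 1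

lemma sylvester_ge_two : ∀ n, 2 ≤ sylvester n
  | 0 => le_refl 2
  | n + 1 => by
      have h := sylvester_ge_two n
      simp only [sylvester]
      have h1 : 1 ≤ sylvester n - 1 := by omega
      have := Nat.mul_le_mul h h1
      omega

lemma sylvester_succ_int (n : ℕ) :
    (sylvester (n + 1) : ℤ) = (sylvester n : ℤ) * ((sylvester n : ℤ) - 1) + 1 := by
  have h := sylvester_ge_two n
  show ((sylvester n * (sylvester n - 1) + 1 : ℕ) : ℤ) = _
  push_cast [Nat.cast_sub (by omega : 1 ≤ sylvester n)]
  ring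

lemma sylvester_odd (n : ℕ) : Odd (sylvester (n + 1)) := by
  have h : Even (sylvester n * (sylvester n - 1)) := Nat.even_mul_pred_self _
  simp only [sylvester]
  exact Even.add_one h

lemma sum_aux (d : ℤ) (a : ℕ → ℤ) (n : ℕ)
    (ha : ∀ i < n, a i * (sylvester i : ℤ) = d) :
    ∀ m ≤ n, (∑ i ∈ Finset.range m, a i) * ((sylvester m : ℤ) - 1)
      = d * ((sylvester m : ℤ) - 2) := by
  intro m
  induction m with
  | zero => intro _; show (0 : ℤ) * ((2:ℕ) - 1 : ℤ) = d * ((2:ℕ) - 2 : ℤ); push_cast; ring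
  | succ m ih =>
    intro hm
    have h1 := ih (by omega)
    have h2 := ha m (by omega)
    rw [Finset.sum_range_succ, sylvester_succ_int]
    set s : ℤ := (sylvester m : ℤ)
    linear_combination s * h1 + (s - 1) * h2

/-- For even `n ≥ 2`, with the even-case weights:
`d ≡ 2`, `a₀ ≡ 1` and `a₀ + ⋯ + aₙ ≡ 3` modulo `aₙ₊₁`. -/
theorem even_case_congruences (n : ℕ) (hn : 2 ≤ n) (he : Even n)
    (an an1 d : ℤ) (a : ℕ → ℤ)
    (han : 4 * an = (sylvester n : ℤ) ^ 2 + (sylvester n : ℤ) - 4)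
    (han1 : 2 * an1 = ((sylvester n : ℤ) - 1) * an - (sylvester n : ℤ) - 1)
    (hd : d = (-1 + an + an1) * ((sylvester n : ℤ) - 1))
    (ha : ∀ i < n, a i * (sylvester i : ℤ) = d)
    (hAn : a n = an) (hAn1 : a (n + 1) = an1) :
    d ≡ 2 [ZMOD an1] ∧ a 0 ≡ 1 [ZMOD an1] ∧
    (∑ i ∈ Finset.range (n + 1), a i) ≡ 3 [ZMOD an1] := by
  set s : ℤ := (sylvester n : ℤ) with hs
  have hs2 : (2 : ℤ) ≤ s := by rw [hs]; exact_mod_cast sylvester_ge_two n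
  -- key identity: d - 2 = an1 * (s + 1)
  have key : d - 2 = an1 * (s + 1) := by linear_combination hd - han1
  refine ⟨Int.modEq_iff_dvd.mpr ⟨-(s + 1), by linarith⟩, ?_, ?_⟩
  · -- a 0 ≡ 1
    have h0 : a 0 * 2 = d := by
      have := ha 0 (by omega)
      simpa [sylvester] using this
    obtain ⟨k, hk⟩ := sylvester_odd (n - 1)
    have hsk : s = 2 * (k : ℤ) + 1 := by
      rw [hs]; rw [show n = n - 1 + 1 by omega, hk]; push_cast; ring
    have h1 : a 0 - 1 = an1 * (k + 1) := by
      have h2 : 2 * (a 0 - 1) = 2 * (an1 * ((k : ℤ) + 1)) := by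
        rw [hsk] at key; linarith
      linarith [mul_left_cancel₀ (two_ne_zero (α := ℤ)) h2]
    exact Int.modEq_iff_dvd.mpr ⟨-(k + 1), by linarith⟩
  · -- sum
    have hS := sum_aux d a n ha n le_rfl
    set S : ℤ := ∑ i ∈ Finset.range n, a i with hSdef
    have hcancel : S = (-1 + an + an1) * (s - 2) := by
      have h3 : (S - (-1 + an + an1) * (s - 2)) * (s - 1) = 0 := by
        rw [← hs] at hS
        linear_combination hS + (s - 2) * hd
      rcases mul_eq_zero.mp h3 with h | h
      · linarith
      · linarith
    have hsum : (∑ i ∈ Finset.range (n + 1), a i) = S + an := by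
      rw [Finset.sum_range_succ, hAn]
    have hfin : (∑ i ∈ Finset.range (n + 1), a i) - 3 = an1 * s := by
      rw [hsum, hcancel]; linear_combination -han1
    exact Int.modEq_iff_dvd.mpr ⟨-s, by linarith⟩
end

section
/- For every even integer n ≥ 2, with the even-case weights and j_0 := (s_n − 1)/2, the fractional parts satisfy {j_0·a_i/a_{n+1}} = (s_n − 1)/(s_i·a_{n+1}) for each i = 0, ..., n−1 and {j_0·a_n/a_{n+1}} = (s_n + 1)/(2a_{n+1}); consequently the sum over i = 0, ..., n of {j_0·a_i/a_{n+1}} equals (3s_n − 3)/(2a_{n+1}), and this sum minus 2j_0/a_{n+1} equals (s_n − 1)/(2a_{n+1}). -/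
lemma sylvester_two_le (k : ℕ) : 2 ≤ sylvester k := by
  induction k with
  | zero => exact le_refl 2
  | succ m ih =>
    show 2 ≤ sylvester m * (sylvester m - 1) + 1
    have h1 : 1 ≤ sylvester m - 1 := by omega
    have := Nat.mul_le_mul ih h1
    omega

lemma sylvester_seven_le {k : ℕ} (hk : 2 ≤ k) : 7 ≤ sylvester k := by
  induction k with
  | zero => omega
  | succ m ih =>
    rcases Nat.lt_or_ge m 2 with hm | hm
    · interval_cases m
      · omega
      · decide
    · have h7 := ih hm
      show 7 ≤ sylvester m * (sylvester m - 1) + 1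
      have h1 : 6 ≤ sylvester m - 1 := by omega
      have := Nat.mul_le_mul h7 h1
      omega

lemma sylvester_dvd {i n : ℕ} (h : i < n) : sylvester i ∣ sylvester n - 1 := by
  induction n with
  | zero => omega
  | succ m ih =>
    have h2 : 2 ≤ sylvester m := sylvester_two_le m
    have heq : sylvester (m + 1) - 1 = sylvester m * (sylvester m - 1) := by
      show sylvester m * (sylvester m - 1) + 1 - 1 = _
      omega
    rw [heq]
    rcases Nat.lt_or_ge i m with him | him
    · exact Dvd.dvd.mul_left (ih him) _
    · have : i = m := by omega
      subst this
      exact Dvd.dvd.mul_right dvd_rfl _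

lemma sylvester_sum (n : ℕ) :
    ∑ i ∈ Finset.range n, (1 : ℚ) / (sylvester i : ℚ) = 1 - 1 / ((sylvester n : ℚ) - 1) := by
  induction n with
  | zero => norm_num [sylvester]
  | succ m ih =>
    rw [Finset.sum_range_succ, ih]
    have h2 : 2 ≤ sylvester m := sylvester_two_le m
    have h2q : (2 : ℚ) ≤ (sylvester m : ℚ) := by exact_mod_cast h2
    have hcast : (sylvester (m + 1) : ℚ) = (sylvester m : ℚ) * ((sylvester m : ℚ) - 1) + 1 := by
      show ((sylvester m * (sylvester m - 1) + 1 : ℕ) : ℚ) = _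
      push_cast [Nat.cast_sub (by omega : 1 ≤ sylvester m)]
      ring
    rw [hcast]
    have h0 : (sylvester m : ℚ) ≠ 0 := by linarith
    have h1 : (sylvester m : ℚ) - 1 ≠ 0 := by intro h; rw [sub_eq_zero] at h; linarith
    field_simp
    ring

/-- For even `n ≥ 2`, with the even-case weights and `j₀ = (sₙ - 1)/2`: the fractional
parts `{j₀ aᵢ / aₙ₊₁}`, their sum, and the resulting log discrepancy `(sₙ - 1)/(2aₙ₊₁)`. -/
theorem even_case_fractional_parts_at_j0 (n : ℕ) (hn : 2 ≤ n) (he : Even n)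
    (an an1 d j0 : ℤ) (a : ℕ → ℤ)
    (han : 4 * an = (sylvester n : ℤ) ^ 2 + (sylvester n : ℤ) - 4)
    (han1 : 2 * an1 = ((sylvester n : ℤ) - 1) * an - (sylvester n : ℤ) - 1)
    (hd : d = (-1 + an + an1) * ((sylvester n : ℤ) - 1))
    (ha : ∀ i < n, a i * (sylvester i : ℤ) = d)
    (hAn : a n = an) (hAn1 : a (n + 1) = an1)
    (hj0 : 2 * j0 = (sylvester n : ℤ) - 1) :
    (∀ i < n, Int.fract ((j0 : ℚ) * (a i : ℚ) / (an1 : ℚ)) =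
      ((sylvester n : ℚ) - 1) / ((sylvester i : ℚ) * (an1 : ℚ))) ∧
    Int.fract ((j0 : ℚ) * (a n : ℚ) / (an1 : ℚ)) =
      ((sylvester n : ℚ) + 1) / (2 * (an1 : ℚ)) ∧
    (∑ i ∈ Finset.range (n + 1), Int.fract ((j0 : ℚ) * (a i : ℚ) / (an1 : ℚ))) =
      (3 * (sylvester n : ℚ) - 3) / (2 * (an1 : ℚ)) ∧
    (∑ i ∈ Finset.range (n + 1), Int.fract ((j0 : ℚ) * (a i : ℚ) / (an1 : ℚ)))
        - 2 * (j0 : ℚ) / (an1 : ℚ) =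
      ((sylvester n : ℚ) - 1) / (2 * (an1 : ℚ)) := by
  have hS7 : (7 : ℤ) ≤ (sylvester n : ℤ) := by exact_mod_cast sylvester_seven_le hn
  have han13 : 13 ≤ an := by nlinarith
  have han1pos : 35 ≤ an1 := by nlinarith
  have hK : j0 * an = an1 + j0 + 1 := by
    have h2 : 2 * (j0 * an) = 2 * (an1 + j0 + 1) := by
      linear_combination an * hj0 - han1 - hj0
    linarith
  have hj0pos : 3 ≤ j0 := by omega
  have hbound : j0 + 1 < an1 := by nlinarith
  have han1Qpos : (0 : ℚ) < (an1 : ℚ) := by exact_mod_cast (by omega : (0:ℤ) < an1)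
  have han1Q : (an1 : ℚ) ≠ 0 := ne_of_gt han1Qpos
  -- part 1
  have part1 : ∀ i < n, Int.fract ((j0 : ℚ) * (a i : ℚ) / (an1 : ℚ)) =
      ((sylvester n : ℚ) - 1) / ((sylvester i : ℚ) * (an1 : ℚ)) := by
    intro i hi
    have hdvdN := sylvester_dvd hi
    have h2n : 2 ≤ sylvester n := sylvester_two_le n
    obtain ⟨c, hc⟩ : (sylvester i : ℤ) ∣ (sylvester n : ℤ) - 1 := by
      have h := Int.natCast_dvd_natCast.mpr hdvdN
      rwa [Nat.cast_sub (by omega : 1 ≤ sylvester n), Nat.cast_one] at h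
    have hsi2 : (2 : ℤ) ≤ (sylvester i : ℤ) := by exact_mod_cast sylvester_two_le i
    have hai : a i * (sylvester i : ℤ) = d := ha i hi
    have hcpos : 0 < c := by nlinarith
    have hclt : c < an1 := by nlinarith
    have hjd : j0 * d = ((sylvester n : ℤ) - 1) * ((j0 + 1) * an1 + 1) := by
      linear_combination j0 * hd + ((sylvester n : ℤ) - 1) * hK
    have hmain : j0 * a i * (sylvester i : ℤ) =
        ((c * (j0 + 1)) * an1 + c) * (sylvester i : ℤ) := by
      linear_combination j0 * hai + hjd + ((j0 + 1) * an1 + 1) * hc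
    have hsine : (sylvester i : ℤ) ≠ 0 := by omega
    have hint : j0 * a i = (c * (j0 + 1)) * an1 + c := mul_right_cancel₀ hsine hmain
    have heq : (j0 : ℚ) * (a i : ℚ) / (an1 : ℚ) =
        ((c * (j0 + 1) : ℤ) : ℚ) + (c : ℚ) / (an1 : ℚ) := by
      have h := congrArg (Int.cast : ℤ → ℚ) hint
      push_cast at h
      field_simp
      push_cast
      linear_combination h
    have hcl : (c : ℚ) < (an1 : ℚ) := by exact_mod_cast hclt
    have hcn : (0 : ℚ) ≤ (c : ℚ) := by exact_mod_cast le_of_lt hcpos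
    rw [heq, Int.fract_intCast_add, Int.fract_eq_self.2 ⟨div_nonneg hcn (le_of_lt han1Qpos),
      (div_lt_one han1Qpos).2 hcl⟩]
    have hcQ : (sylvester n : ℚ) - 1 = (sylvester i : ℚ) * (c : ℚ) := by
      have h := congrArg (Int.cast : ℤ → ℚ) hc
      push_cast at h
      linear_combination h
    rw [hcQ]
    have hsiQ : (sylvester i : ℚ) ≠ 0 := by
      have : (0:ℚ) < (sylvester i : ℚ) := by exact_mod_cast (by omega : (0:ℤ) < (sylvester i : ℤ))
      exact ne_of_gt this
    rw [mul_div_mul_left _ _ hsiQ]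
  -- part 2
  have part2 : Int.fract ((j0 : ℚ) * (a n : ℚ) / (an1 : ℚ)) =
      ((sylvester n : ℚ) + 1) / (2 * (an1 : ℚ)) := by
    have hint : j0 * a n = 1 * an1 + (j0 + 1) := by rw [hAn]; linarith
    have heq : (j0 : ℚ) * (a n : ℚ) / (an1 : ℚ) =
        ((1 : ℤ) : ℚ) + ((j0 : ℚ) + 1) / (an1 : ℚ) := by
      have h := congrArg (Int.cast : ℤ → ℚ) hint
      push_cast at h
      field_simp
      linear_combination h
    have h1 : (0 : ℚ) ≤ ((j0 : ℚ) + 1) := by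
      have : (0:ℤ) ≤ j0 + 1 := by omega
      exact_mod_cast this
    have h2 : ((j0 : ℚ) + 1) < (an1 : ℚ) := by exact_mod_cast hbound
    rw [heq, Int.fract_intCast_add, Int.fract_eq_self.2 ⟨div_nonneg h1 (le_of_lt han1Qpos),
      (div_lt_one han1Qpos).2 h2⟩]
    have hj0Q : 2 * (j0 : ℚ) = (sylvester n : ℚ) - 1 := by exact_mod_cast hj0
    field_simp
    linear_combination hj0Q
  -- part 3
  have hSQ7 : (7 : ℚ) ≤ (sylvester n : ℚ) := by exact_mod_cast hS7
  have hS1 : (sylvester n : ℚ) - 1 ≠ 0 := by intro h; rw [sub_eq_zero] at h; linarith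
  have part3 : (∑ i ∈ Finset.range (n + 1), Int.fract ((j0 : ℚ) * (a i : ℚ) / (an1 : ℚ))) =
      (3 * (sylvester n : ℚ) - 3) / (2 * (an1 : ℚ)) := by
    rw [Finset.sum_range_succ, part2,
      Finset.sum_congr rfl (fun i hi => part1 i (Finset.mem_range.1 hi))]
    have hsum : ∑ i ∈ Finset.range n, ((sylvester n : ℚ) - 1) / ((sylvester i : ℚ) * (an1 : ℚ))
        = ((sylvester n : ℚ) - 1) / (an1 : ℚ) * (1 - 1 / ((sylvester n : ℚ) - 1)) := by
      rw [← sylvester_sum n, Finset.mul_sum]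
      refine Finset.sum_congr rfl fun i _ => ?_
      rw [div_mul_div_comm, mul_one, mul_comm (an1 : ℚ)]
    rw [hsum]
    field_simp
    ring
  refine ⟨part1, part2, part3, ?_⟩
  rw [part3]
  have hj0Q : 2 * (j0 : ℚ) = (sylvester n : ℚ) - 1 := by exact_mod_cast hj0
  have h1 : 2 * (j0 : ℚ) / (an1 : ℚ) = (2 * (sylvester n : ℚ) - 2) / (2 * (an1 : ℚ)) := by
    field_simp
    linear_combination hj0Q
  rw [h1, div_sub_div_same]
  congr 1
  ring
end
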